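/- Let X be an extended quasi-metric space and ℓ ∈ [0,∞). The map ℤ^{Adj(X,ℓ)} → MH^1_ℓ(X) sending m : Adj(X,ℓ) → ℤ to the cohomology class of the cochain ψ_m, defined on 1-simplices by ψ_m(x,y) = m(x,y) if (x,y) is an adjacent pair and ψ_m(x,y) = 0 otherwise, is an isomorphism of abelian groups. Moreover, under this isomorphism and the ring isomorphism MH^0_0(X) ≅ ℤ^X, the MH^0_0(X)-bimodule structure on MH^1_ℓ(X) given by the magnitude cohomology product corresponds to the ℤ^X-bimodule structure on ℤ^{Adj(X,ℓ)} given by (f·m·g)(x,y) = f(x)·m(x,y)·g(y). -/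

import Mathlib

/-! Core definitions: magnitude (co)homology of generalised metric spaces. -/

open scoped ENNReal NNReal Classical
noncomputable section

/-- A generalised metric space (extended pseudo-quasi-metric space):
a set with a distance in `[0,∞]` satisfying `d x x = 0` and the triangle
inequality, but not necessarily symmetry or separation. -/
structure GMS (X : Type*) where
  d : X → X → ℝ≥0∞
  d_self : ∀ x, d x x = 0
  d_triangle : ∀ x y z, d x z ≤ d x y + d y z

variable {X : Type*}

/-- An extended quasi-metric space: distinct points are at nonzero distance. -/
def GMS.Quasi (M : GMS X) : Prop := ∀ x y, M.d x y = 0 → x = y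

/-- Consecutive entries of the tuple are distinct, i.e. it is a simplex. -/
def SepTuple {k : ℕ} (x : Fin (k + 1) → X) : Prop :=
  ∀ i : Fin k, x i.castSucc ≠ x i.succ

/-- The length of a tuple: the sum of consecutive distances. -/
def GMS.len (M : GMS X) {k : ℕ} (x : Fin (k + 1) → X) : ℝ≥0∞ :=
  ∑ i : Fin k, M.d (x i.castSucc) (x i.succ)

/-- A `k`-simplex of length `ℓ` in the generalised metric space `M`. -/
structure MSimplex (M : GMS X) (k : ℕ) (ℓ : ℝ≥0) where
  pts : Fin (k + 1) → X
  sep : SepTuple pts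
  len_eq : M.len pts = (ℓ : ℝ≥0∞)

/-- The magnitude chain group `MC_{k,ℓ}`: the free abelian group on the
`k`-simplices of length `ℓ`. -/
abbrev MC (M : GMS X) (k : ℕ) (ℓ : ℝ≥0) := MSimplex M k ℓ →₀ ℤ

/-- The magnitude cochain group `MC^k_ℓ = Hom(MC_{k,ℓ}, ℤ)`, identified with
the group of all `ℤ`-valued functions on `k`-simplices of length `ℓ`. -/
abbrev MCo (M : GMS X) (k : ℕ) (ℓ : ℝ≥0) := MSimplex M k ℓ → ℤ

/-- Remove the `(j+1)`-st point (an inner point) from a tuple. -/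
def faceTuple {k : ℕ} (x : Fin (k + 2) → X) (j : Fin k) : Fin (k + 1) → X :=
  x ∘ Fin.succAbove ⟨j.val + 1, by have := j.isLt; omega⟩

/-- The condition under which the inner face `∂_{j+1}` of a simplex is a simplex
of the same length: the removed point lies on a geodesic between its
neighbours (and, redundantly in quasi-metric spaces, the face is again a
simplex of the same length). -/
def GMS.FaceOK (M : GMS X) {k : ℕ} {ℓ : ℝ≥0} (s : MSimplex M (k + 1) ℓ) (j : Fin k) : Prop :=
  M.d (s.pts ⟨j.val, by have := j.isLt; omega⟩) (s.pts ⟨j.val + 2, by have := j.isLt; omega⟩) =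
      M.d (s.pts ⟨j.val, by have := j.isLt; omega⟩) (s.pts ⟨j.val + 1, by have := j.isLt; omega⟩) +
      M.d (s.pts ⟨j.val + 1, by have := j.isLt; omega⟩) (s.pts ⟨j.val + 2, by have := j.isLt; omega⟩)
    ∧ SepTuple (faceTuple s.pts j) ∧ M.len (faceTuple s.pts j) = (ℓ : ℝ≥0∞)

/-- The inner face `∂_{j+1}` of a simplex, when defined. -/
def GMS.face (M : GMS X) {k : ℕ} {ℓ : ℝ≥0} (s : MSimplex M (k + 1) ℓ) (j : Fin k)
    (h : M.FaceOK s j) : MSimplex M k ℓ :=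
  ⟨faceTuple s.pts j, h.2.1, h.2.2⟩

/-- The magnitude coboundary `∂^* : MC^k_ℓ → MC^{k+1}_ℓ`, dual to the
differential `∂ = -∂_1 + ∂_2 - ⋯ + (-1)^k ∂_k`. -/
def MCoDelta (M : GMS X) (k : ℕ) (ℓ : ℝ≥0) : MCo M k ℓ →ₗ[ℤ] MCo M (k + 1) ℓ where
  toFun φ := fun s => ∑ j : Fin k, (-1 : ℤ) ^ (j.val + 1) *
      (if h : M.FaceOK s j then φ (M.face s j h) else 0)
  map_add' φ ψ := by
    funext s
    simp only [Pi.add_apply]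
    rw [← Finset.sum_add_distrib]
    refine Finset.sum_congr rfl fun j _ => ?_
    split <;> ring
  map_smul' z φ := by
    funext s
    simp only [Pi.smul_apply, smul_eq_mul, RingHom.id_apply]
    rw [Finset.mul_sum]
    refine Finset.sum_congr rfl fun j _ => ?_
    split <;> ring

/-- Magnitude cocycles in bidegree `(k, ℓ)`. -/
def MCocycle (M : GMS X) (k : ℕ) (ℓ : ℝ≥0) : Submodule ℤ (MCo M k ℓ) :=
  LinearMap.ker (MCoDelta M k ℓ)

/-- Magnitude coboundaries in bidegree `(k, ℓ)` (zero in degree `0`). -/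
def MCobound (M : GMS X) : (k : ℕ) → (ℓ : ℝ≥0) → Submodule ℤ (MCo M k ℓ)
  | 0, _ => ⊥
  | (k + 1), ℓ => LinearMap.range (MCoDelta M k ℓ)

/-- The magnitude cohomology group `MH^k_ℓ(X)`: cocycles modulo coboundaries. -/
abbrev MagCohomology (M : GMS X) (k : ℕ) (ℓ : ℝ≥0) :=
  MCocycle M k ℓ ⧸ (MCobound M k ℓ).comap (MCocycle M k ℓ).subtype

/-- The cohomology class of a cochain (zero if it is not a cocycle). -/
def cohClass (M : GMS X) {k : ℕ} {ℓ : ℝ≥0} (φ : MCo M k ℓ) : MagCohomology M k ℓ :=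
  if h : φ ∈ MCocycle M k ℓ then Submodule.Quotient.mk ⟨φ, h⟩ else 0

/-- A representative cocycle of a magnitude cohomology class. -/
def MHout (M : GMS X) {k : ℕ} {ℓ : ℝ≥0} (α : MagCohomology M k ℓ) : MCo M k ℓ :=
  ((Submodule.Quotient.mk_surjective _) α).choose.val

/-- The first `j+1` points of a `(j+k)`-simplex. -/
def frontT (j k : ℕ) (x : Fin (j + k + 1) → X) : Fin (j + 1) → X :=
  fun i => x ⟨i.val, by have := i.isLt; omega⟩

/-- The last `k+1` points of a `(j+k)`-simplex. -/
def backT (j k : ℕ) (x : Fin (j + k + 1) → X) : Fin (k + 1) → X :=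
  fun i => x ⟨j + i.val, by have := i.isLt; omega⟩

lemma SepTuple.front {j k : ℕ} {x : Fin (j + k + 1) → X} (h : SepTuple x) :
    SepTuple (frontT j k x) := by
  intro i
  have hi := i.isLt
  exact h ⟨i.val, by omega⟩

lemma SepTuple.back {j k : ℕ} {x : Fin (j + k + 1) → X} (h : SepTuple x) :
    SepTuple (backT j k x) := by
  intro i
  have hi := i.isLt
  exact h ⟨j + i.val, by omega⟩

/-- The product of magnitude cochains:
`(φ·ψ)(x_0,…,x_{j+k}) = φ(x_0,…,x_j) · ψ(x_j,…,x_{j+k})`,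
where a cochain of length-degree `ℓ` vanishes on simplices of other lengths. -/
def MCup (M : GMS X) {j k : ℕ} {ℓ m : ℝ≥0} (φ : MCo M j ℓ) (ψ : MCo M k m) :
    MCo M (j + k) (ℓ + m) :=
  fun s =>
    if h : M.len (frontT j k s.pts) = (ℓ : ℝ≥0∞) ∧ M.len (backT j k s.pts) = (m : ℝ≥0∞) then
      φ ⟨frontT j k s.pts, s.sep.front, h.1⟩ * ψ ⟨backT j k s.pts, s.sep.back, h.2⟩
    else 0

/-- The unit cochain `u ∈ MC^0_0`, with `u(x_0) = 1`. -/
def MCoUnit (M : GMS X) : MCo M 0 0 := fun _ => 1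

/-- Transport of magnitude cohomology classes along equalities of bidegrees. -/
def MHcast (M : GMS X) {k k' : ℕ} {ℓ ℓ' : ℝ≥0} (hk : k = k') (hl : ℓ = ℓ')
    (α : MagCohomology M k ℓ) : MagCohomology M k' ℓ' := hk ▸ hl ▸ α

/-- Transport of magnitude cochains along equalities of bidegrees. -/
def MCoCast (M : GMS X) {k k' : ℕ} {ℓ ℓ' : ℝ≥0} (hk : k = k') (hl : ℓ = ℓ')
    (φ : MCo M k ℓ) : MCo M k' ℓ' := hk ▸ hl ▸ φ

/-- The product on magnitude cohomology induced by the product of cochains. -/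
def MHmul (M : GMS X) {j k : ℕ} {ℓ m : ℝ≥0} (α : MagCohomology M j ℓ)
    (β : MagCohomology M k m) : MagCohomology M (j + k) (ℓ + m) :=
  cohClass M (MCup M (MHout M α) (MHout M β))

/-- The unit of the magnitude cohomology ring. -/
def MHone (M : GMS X) : MagCohomology M 0 0 := cohClass M (MCoUnit M)

/-- Two points are adjacent: their distance is nonzero and finite, and no
third point lies strictly between them. -/
def GMS.Adjacent (M : GMS X) (x y : X) : Prop :=
  M.d x y ≠ 0 ∧ M.d x y ≠ ∞ ∧ ∀ a, M.d x y = M.d x a + M.d a y → a = x ∨ a = y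

/-- An isomorphism of magnitude cohomology rings: a family of additive
isomorphisms respecting both gradings, the product, and the unit. -/
def MHRingIso {Y : Type*} (M : GMS X) (M' : GMS Y) : Prop :=
  ∃ e : ∀ (k : ℕ) (ℓ : ℝ≥0), MagCohomology M k ℓ ≃+ MagCohomology M' k ℓ,
    (e 0 0 (MHone M) = MHone M') ∧
    ∀ (j k : ℕ) (ℓ m : ℝ≥0) (α : MagCohomology M j ℓ) (β : MagCohomology M k m),
      e (j + k) (ℓ + m) (MHmul M α β) = MHmul M' (e j ℓ α) (e k m β)


/-- The map `ℤ^X → MH^0_0(X)`, `f ↦ [φ_f]` where `φ_f((x_0)) = f(x_0)`. -/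
def Phi0 (M : GMS X) (f : X → ℤ) : MagCohomology M 0 0 :=
  cohClass M (fun s : MSimplex M 0 0 => f (s.pts 0))

/-- `Adj(X, ℓ)`: ordered pairs of adjacent points at distance `ℓ`. -/
def AdjPairs (M : GMS X) (ℓ : ℝ≥0) : Type _ :=
  {p : X × X // M.Adjacent p.1 p.2 ∧ M.d p.1 p.2 = (ℓ : ℝ≥0∞)}

/-- The map `ℤ^{Adj(X,ℓ)} → MH^1_ℓ(X)`, `m ↦ [ψ_m]`, where `ψ_m(x,y) = m(x,y)`
for adjacent pairs `(x,y)` and `ψ_m(x,y) = 0` otherwise. -/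
def Psi1 (M : GMS X) (ℓ : ℝ≥0) (m : AdjPairs M ℓ → ℤ) : MagCohomology M 1 ℓ :=
  cohClass M (fun s : MSimplex M 1 ℓ =>
    if h : M.Adjacent (s.pts 0) (s.pts 1) ∧ M.d (s.pts 0) (s.pts 1) = (ℓ : ℝ≥0∞) then
      m ⟨(s.pts 0, s.pts 1), h⟩
    else 0)

/-!
Since `∂*` vanishes in degree 0, there are no coboundaries in bidegrees `(0, 0)` and `(1, ℓ)`,
so these cohomology classes are just cocycles. In degree one, `∂*φ (x, a, y) = -φ (x, y)`
whenever `a` lies strictly between `x` and `y`, and in a quasi-metric space a 1-simplex of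
finite length is non-adjacent exactly when such an `a` exists. Hence the 1-cocycles are the
cochains supported on adjacent pairs, i.e. the `ψ_m`, and multiplying by the degree-0 classes
`[φ_f]`, `[φ_g]` just multiplies by `f` and `g` at the two endpoints.
-/

namespace MSimplex

variable {M : GMS X} {k : ℕ} {ℓ : ℝ≥0}

lemma ext {s t : MSimplex M k ℓ} (h : s.pts = t.pts) : s = t := by
  cases s; cases t; simpa using h

@[simps]
def castLen {ℓ' : ℝ≥0} (h : ℓ = ℓ') (s : MSimplex M k ℓ) : MSimplex M k ℓ' :=
  ⟨s.pts, s.sep, h ▸ s.len_eq⟩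

lemma d_eq (s : MSimplex M 1 ℓ) : M.d (s.pts 0) (s.pts 1) = ℓ := by
  simpa [GMS.len] using s.len_eq

end MSimplex

def AdjPairs.toSimplex {M : GMS X} {ℓ : ℝ≥0} (p : AdjPairs M ℓ) : MSimplex M 1 ℓ where
  pts := ![p.val.1, p.val.2]
  sep i := by
    fin_cases i
    simpa using fun h => p.2.1.1 (by rw [h]; exact M.d_self _)
  len_eq := by simpa [GMS.len] using p.2.2

section Cohomology

variable {M : GMS X} {k : ℕ} {ℓ : ℝ≥0}

lemma MCoDelta_zero (M : GMS X) (ℓ : ℝ≥0) : MCoDelta M 0 ℓ = 0 := by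
  ext φ s
  simp [MCoDelta]

lemma mem_MCocycle_zero (φ : MCo M 0 ℓ) : φ ∈ MCocycle M 0 ℓ := by
  simp [MCocycle, MCoDelta_zero]

lemma MCobound_zero (M : GMS X) (ℓ : ℝ≥0) : MCobound M 0 ℓ = ⊥ := rfl

lemma MCobound_one (M : GMS X) (ℓ : ℝ≥0) : MCobound M 1 ℓ = ⊥ := by
  simp [MCobound, MCoDelta_zero]

lemma cohClass_of_mem {φ : MCo M k ℓ} (hφ : φ ∈ MCocycle M k ℓ) :
    cohClass M φ = Submodule.Quotient.mk ⟨φ, hφ⟩ :=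
  dif_pos hφ

lemma cohClass_add {φ ψ : MCo M k ℓ} (hφ : φ ∈ MCocycle M k ℓ) (hψ : ψ ∈ MCocycle M k ℓ) :
    cohClass M (φ + ψ) = cohClass M φ + cohClass M ψ := by
  rw [cohClass_of_mem (add_mem hφ hψ), cohClass_of_mem hφ, cohClass_of_mem hψ,
    ← Submodule.Quotient.mk_add]
  rfl

lemma MHout_cohClass (hb : MCobound M k ℓ = ⊥) {φ : MCo M k ℓ} (hφ : φ ∈ MCocycle M k ℓ) :
    MHout M (cohClass M φ) = φ := by
  have key : ∀ ψ : MCocycle M k ℓ, Submodule.Quotient.mk ψ = cohClass M φ → ψ.val = φ := by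
    intro ψ hψ
    rwa [cohClass_of_mem hφ, Submodule.Quotient.eq, Submodule.mem_comap, hb, Submodule.mem_bot,
      map_sub, sub_eq_zero] at hψ
  exact key _ (Submodule.Quotient.mk_surjective _ _).choose_spec

lemma cohClass_injOn (hb : MCobound M k ℓ = ⊥) :
    Set.InjOn (cohClass M) (MCocycle M k ℓ : Set (MCo M k ℓ)) :=
  fun φ hφ ψ hψ h => by rw [← MHout_cohClass hb hφ, ← MHout_cohClass hb hψ, h]

lemma MHmul_cohClass {j : ℕ} {m : ℝ≥0} (hbφ : MCobound M j ℓ = ⊥) (hbψ : MCobound M k m = ⊥)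
    {φ : MCo M j ℓ} {ψ : MCo M k m} (hφ : φ ∈ MCocycle M j ℓ) (hψ : ψ ∈ MCocycle M k m) :
    MHmul M (cohClass M φ) (cohClass M ψ) = cohClass M (MCup M φ ψ) := by
  rw [MHmul, MHout_cohClass hbφ hφ, MHout_cohClass hbψ hψ]

lemma MHcast_cohClass {k' : ℕ} {ℓ' : ℝ≥0} (hk : k = k') (hl : ℓ = ℓ') (φ : MCo M k ℓ) :
    MHcast M hk hl (cohClass M φ) = cohClass M (MCoCast M hk hl φ) := by
  subst hk hl; rfl

lemma MCoCast_apply {ℓ' : ℝ≥0} (hl : ℓ = ℓ') (φ : MCo M k ℓ) (s : MSimplex M k ℓ') :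
    MCoCast M rfl hl φ s = φ (s.castLen hl.symm) := by
  subst hl; rfl

end Cohomology

section DegreeOne

variable {M : GMS X} {ℓ : ℝ≥0}

lemma MCoDelta_one_apply (φ : MCo M 1 ℓ) (t : MSimplex M 2 ℓ) :
    MCoDelta M 1 ℓ φ t = -(if h : M.FaceOK t 0 then φ (M.face t 0 h) else 0) := by
  simp only [MCoDelta, LinearMap.coe_mk, AddHom.coe_mk, Fin.sum_univ_one]
  split <;> simp

lemma faceTuple_fin_three (x : Fin 3 → X) : faceTuple x 0 = ![x 0, x 2] := by
  funext i
  fin_cases i <;> simp [faceTuple, Fin.succAbove]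

lemma not_adjacent_face (t : MSimplex M 2 ℓ) (h : M.FaceOK t 0) :
    ¬ M.Adjacent ((M.face t 0 h).pts 0) ((M.face t 0 h).pts 1) := by
  have hpts : (M.face t 0 h).pts = ![t.pts 0, t.pts 2] := faceTuple_fin_three t.pts
  rw [hpts]
  intro hadj
  rcases hadj.2.2 (t.pts 1) h.1 with h' | h'
  · exact t.sep 0 h'.symm
  · exact t.sep 1 h'

lemma exists_face_eq_of_not_adjacent (hq : M.Quasi) (s : MSimplex M 1 ℓ)
    (hs : ¬ M.Adjacent (s.pts 0) (s.pts 1)) :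
    ∃ (t : MSimplex M 2 ℓ) (h : M.FaceOK t 0), M.face t 0 h = s := by
  have hd0 : M.d (s.pts 0) (s.pts 1) ≠ 0 := fun h0 => s.sep 0 (hq _ _ h0)
  have hdtop : M.d (s.pts 0) (s.pts 1) ≠ ∞ := by rw [s.d_eq]; exact ENNReal.coe_ne_top
  obtain ⟨a, ha, hax, hay⟩ : ∃ a, M.d (s.pts 0) (s.pts 1) = M.d (s.pts 0) a + M.d a (s.pts 1) ∧
      a ≠ s.pts 0 ∧ a ≠ s.pts 1 := by
    simpa [GMS.Adjacent, hd0, hdtop] using hs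
  have hface : faceTuple ![s.pts 0, a, s.pts 1] 0 = s.pts := by
    rw [faceTuple_fin_three]
    funext i
    fin_cases i <;> rfl
  let t : MSimplex M 2 ℓ :=
    { pts := ![s.pts 0, a, s.pts 1]
      sep := by
        intro i
        fin_cases i
        · simpa using hax.symm
        · simpa using hay
      len_eq := by simpa [GMS.len, Fin.sum_univ_two, ← ha] using s.d_eq }
  exact ⟨t, ⟨ha, hface ▸ s.sep, hface ▸ s.len_eq⟩, MSimplex.ext hface⟩

lemma mem_MCocycle_one_of_apply_eq_zero {φ : MCo M 1 ℓ}
    (hφ : ∀ s : MSimplex M 1 ℓ, ¬ M.Adjacent (s.pts 0) (s.pts 1) → φ s = 0) :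
    φ ∈ MCocycle M 1 ℓ := by
  refine LinearMap.mem_ker.2 (funext fun t => ?_)
  rw [MCoDelta_one_apply]
  split_ifs with h
  · rw [hφ _ (not_adjacent_face t h), neg_zero]; rfl
  · rfl

lemma apply_eq_zero_of_mem_MCocycle_one (hq : M.Quasi) {φ : MCo M 1 ℓ}
    (hφ : φ ∈ MCocycle M 1 ℓ) (s : MSimplex M 1 ℓ) (hs : ¬ M.Adjacent (s.pts 0) (s.pts 1)) :
    φ s = 0 := by
  obtain ⟨t, h, rfl⟩ := exists_face_eq_of_not_adjacent hq s hs
  have hδ := congrFun (LinearMap.mem_ker.1 hφ) t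
  rwa [MCoDelta_one_apply, dif_pos h, Pi.zero_apply, neg_eq_zero] at hδ

end DegreeOne

section AdjCochain

variable {M : GMS X} {ℓ : ℝ≥0}

def adjCochain (M : GMS X) (ℓ : ℝ≥0) (m : AdjPairs M ℓ → ℤ) : MCo M 1 ℓ := fun s =>
  if h : M.Adjacent (s.pts 0) (s.pts 1) ∧ M.d (s.pts 0) (s.pts 1) = (ℓ : ℝ≥0∞) then
    m ⟨(s.pts 0, s.pts 1), h⟩
  else 0

lemma Psi1_eq_cohClass (m : AdjPairs M ℓ → ℤ) : Psi1 M ℓ m = cohClass M (adjCochain M ℓ m) :=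
  rfl

lemma adjCochain_toSimplex (m : AdjPairs M ℓ → ℤ) (p : AdjPairs M ℓ) :
    adjCochain M ℓ m p.toSimplex = m p :=
  dif_pos p.2

lemma adjCochain_apply_of_not_adjacent (m : AdjPairs M ℓ → ℤ) (s : MSimplex M 1 ℓ)
    (hs : ¬ M.Adjacent (s.pts 0) (s.pts 1)) : adjCochain M ℓ m s = 0 :=
  dif_neg fun h => hs h.1

lemma adjCochain_add (m m' : AdjPairs M ℓ → ℤ) :
    adjCochain M ℓ (m + m') = adjCochain M ℓ m + adjCochain M ℓ m' := by
  funext s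
  rw [Pi.add_apply]
  unfold adjCochain
  split_ifs <;> rfl

lemma adjCochain_mem_MCocycle (m : AdjPairs M ℓ → ℤ) : adjCochain M ℓ m ∈ MCocycle M 1 ℓ :=
  mem_MCocycle_one_of_apply_eq_zero (adjCochain_apply_of_not_adjacent m)

lemma adjCochain_comp_toSimplex (hq : M.Quasi) {φ : MCo M 1 ℓ} (hφ : φ ∈ MCocycle M 1 ℓ) :
    adjCochain M ℓ (fun p => φ p.toSimplex) = φ := by
  funext s
  by_cases h : M.Adjacent (s.pts 0) (s.pts 1)
  · rw [adjCochain, dif_pos ⟨h, s.d_eq⟩]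
    exact congrArg φ (MSimplex.ext (funext fun i => by fin_cases i <;> rfl))
  · rw [adjCochain_apply_of_not_adjacent _ s h, apply_eq_zero_of_mem_MCocycle_one hq hφ s h]

lemma Psi1_injective : Function.Injective (Psi1 M ℓ) := by
  intro m m' h
  have hcoc := cohClass_injOn (MCobound_one M ℓ) (adjCochain_mem_MCocycle m)
    (adjCochain_mem_MCocycle m') h
  funext p
  simpa only [adjCochain_toSimplex] using congrFun hcoc p.toSimplex

lemma Psi1_surjective (hq : M.Quasi) : Function.Surjective (Psi1 M ℓ) := by
  intro α
  obtain ⟨⟨φ, hφ⟩, rfl⟩ := Submodule.Quotient.mk_surjective _ α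
  exact ⟨fun p => φ p.toSimplex, by
    rw [Psi1_eq_cohClass, adjCochain_comp_toSimplex hq hφ, cohClass_of_mem hφ]⟩

lemma Psi1_add (m m' : AdjPairs M ℓ → ℤ) : Psi1 M ℓ (m + m') = Psi1 M ℓ m + Psi1 M ℓ m' := by
  rw [Psi1_eq_cohClass, adjCochain_add,
    cohClass_add (adjCochain_mem_MCocycle m) (adjCochain_mem_MCocycle m')]
  rfl

end AdjCochain

section Bimodule

variable {M : GMS X} {ℓ : ℝ≥0}

lemma MCup_apply_zero_one (f : X → ℤ) (ψ : MCo M 1 ℓ) (s : MSimplex M (0 + 1) (0 + ℓ)) :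
    MCup M (fun t : MSimplex M 0 0 => f (t.pts 0)) ψ s =
      f (s.pts 0) * ψ (s.castLen (zero_add ℓ)) := by
  have hfront : M.len (frontT 0 1 s.pts) = ((0 : ℝ≥0) : ℝ≥0∞) := by simp [GMS.len]
  have hback : M.len (backT 0 1 s.pts) = ℓ := by
    simpa [GMS.len, backT] using (s.castLen (zero_add ℓ)).d_eq
  rw [MCup, dif_pos ⟨hfront, hback⟩]
  exact congrArg (f (s.pts 0) * ψ ·) (MSimplex.ext (funext fun i => by fin_cases i <;> rfl))

lemma MCup_apply_one_zero (φ : MCo M 1 ℓ) (g : X → ℤ) (s : MSimplex M (1 + 0) (ℓ + 0)) :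
    MCup M φ (fun t : MSimplex M 0 0 => g (t.pts 0)) s =
      φ (s.castLen (add_zero ℓ)) * g (s.pts 1) := by
  have hfront : M.len (frontT 1 0 s.pts) = ℓ := by
    simpa [GMS.len, frontT] using (s.castLen (add_zero ℓ)).d_eq
  have hback : M.len (backT 1 0 s.pts) = ((0 : ℝ≥0) : ℝ≥0∞) := by simp [GMS.len]
  exact dif_pos ⟨hfront, hback⟩

lemma MCup_zero_one_mem_MCocycle (f : X → ℤ) {ψ : MCo M 1 ℓ}
    (hψ : ∀ s : MSimplex M 1 ℓ, ¬ M.Adjacent (s.pts 0) (s.pts 1) → ψ s = 0) :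
    MCup M (fun t : MSimplex M 0 0 => f (t.pts 0)) ψ ∈ MCocycle M (0 + 1) (0 + ℓ) :=
  mem_MCocycle_one_of_apply_eq_zero fun s hs => by
    rw [MCup_apply_zero_one, hψ (s.castLen _) hs, mul_zero]

lemma MCup_MCup_adjCochain (f g : X → ℤ) (m : AdjPairs M ℓ → ℤ)
    (s : MSimplex M (0 + 1 + 0) (0 + ℓ + 0)) :
    MCup M (MCup M (fun t : MSimplex M 0 0 => f (t.pts 0)) (adjCochain M ℓ m))
        (fun t : MSimplex M 0 0 => g (t.pts 0)) s =
      adjCochain M ℓ (fun p => f p.val.1 * m p * g p.val.2) (s.castLen (by simp)) := by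
  rw [MCup_apply_one_zero, MCup_apply_zero_one]
  simp only [adjCochain, MSimplex.castLen_pts]
  split_ifs <;> ring

lemma Phi0_mul_Psi1_mul_Phi0 (f g : X → ℤ) (m : AdjPairs M ℓ → ℤ) :
    MHmul M (MHmul M (Phi0 M f) (Psi1 M ℓ m)) (Phi0 M g) =
      MHcast M (by norm_num) (by norm_num) (Psi1 M ℓ (fun p => f p.val.1 * m p * g p.val.2)) := by
  have hcoc := MCup_zero_one_mem_MCocycle f (adjCochain_apply_of_not_adjacent m)
  simp only [Phi0, Psi1_eq_cohClass]
  rw [MHmul_cohClass (MCobound_zero M 0) (MCobound_one M ℓ) (mem_MCocycle_zero _)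
      (adjCochain_mem_MCocycle m),
    MHmul_cohClass (MCobound_one M (0 + ℓ)) (MCobound_zero M 0) hcoc (mem_MCocycle_zero _),
    MHcast_cohClass]
  congr 1
  funext s
  rw [MCup_MCup_adjCochain, MCoCast_apply]

end Bimodule

/-- `m ↦ [ψ_m]` is an isomorphism of abelian groups `ℤ^{Adj(X,ℓ)} ≅ MH^1_ℓ(X)`,
and it matches the `MH^0_0(X)`-bimodule structure of `MH^1_ℓ(X)` with the
`ℤ^X`-bimodule structure `(f·m·g)(x,y) = f(x)·m(x,y)·g(y)` on `ℤ^{Adj(X,ℓ)}`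
under the ring isomorphism `ℤ^X ≅ MH^0_0(X)`. -/
theorem mh_one_bimodule (M : GMS X) (hq : M.Quasi) (ℓ : ℝ≥0) :
    Function.Bijective (Psi1 M ℓ) ∧
    (∀ m m' : AdjPairs M ℓ → ℤ, Psi1 M ℓ (m + m') = Psi1 M ℓ m + Psi1 M ℓ m') ∧
    (∀ (f g : X → ℤ) (m : AdjPairs M ℓ → ℤ),
      MHmul M (MHmul M (Phi0 M f) (Psi1 M ℓ m)) (Phi0 M g) =
        MHcast M (by norm_num) (by norm_num)
          (Psi1 M ℓ (fun p => f p.val.1 * m p * g p.val.2))) :=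
  ⟨⟨Psi1_injective, Psi1_surjective hq⟩, Psi1_add, Phi0_mul_Psi1_mul_Phi0⟩
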